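/- arXiv:2505.10186 — 8 statements merged into one kernel-verified Lean document; each statement's English description precedes it below -/
import Mathlib

section
/- Let A and B be types, equip A^ω and B^ω with the Cantor metric, and let f : A^ω → 𝒫(B^ω) satisfy f(π) ≠ ∅ for every π ∈ A^ω. Then f is prefix-continuous, prefix-closed, and prefix-compact if and only if f(π) is a compact subset of B^ω for every π ∈ A^ω and the induced map A^ω → 𝒦(B^ω), π ↦ f(π), is continuous with respect to the Hausdorff metric on 𝒦(B^ω). -/
/-- The prefix of length `n` of the infinite word `π`, i.e. the list `[π 0, …, π (n-1)]`. -/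
def wordPrefix {A : Type*} (π : ℕ → A) (n : ℕ) : List A := (List.range n).map π

/-- The set of prefixes of length `n` of words in `L`. -/
def prefN {A : Type*} (L : Set (ℕ → A)) (n : ℕ) : Set (List A) :=
  (fun π => wordPrefix π n) '' L

/-- The set of all prefixes of words in `L`. -/
def prefAll {A : Type*} (L : Set (ℕ → A)) : Set (List A) := ⋃ n, prefN L n

/-- The set of all prefixes of the single word `π`. -/
def prefWord {A : Type*} (π : ℕ → A) : Set (List A) := {w | ∃ n, w = wordPrefix π n}

/-- `f` is prefix-continuous. -/
def PrefixContinuous {A B : Type*} (f : (ℕ → A) → Set (ℕ → B)) : Prop :=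
  ∀ (n : ℕ) (π : ℕ → A), ∃ m : ℕ, ∀ π' : ℕ → A,
    wordPrefix π' m = wordPrefix π m → prefN (f π) n = prefN (f π') n

/-- `f` is prefix-closed. -/
def PrefixClosed {A B : Type*} (f : (ℕ → A) → Set (ℕ → B)) : Prop :=
  ∀ (π : ℕ → A) (σ : ℕ → B), prefWord σ ⊆ prefAll (f π) → σ ∈ f π

/-- `f` is prefix-compact. -/
def PrefixCompact {A B : Type*} (f : (ℕ → A) → Set (ℕ → B)) : Prop :=
  ∀ (n : ℕ) (π : ℕ → A), (prefN (f π) n).Finite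

/-- The universal preimage of `S` under `f`. -/
def univPreimage {A B : Type*} (f : (ℕ → A) → Set (ℕ → B)) (S : Set (ℕ → B)) :
    Set (ℕ → A) := {π | f π ⊆ S}

/-- The existential preimage of `S` under `f`. -/
def existPreimage {A B : Type*} (f : (ℕ → A) → Set (ℕ → B)) (S : Set (ℕ → B)) :
    Set (ℕ → A) := {π | (f π ∩ S).Nonempty}

/-- `L` is a safety property. -/
def IsSafetyProperty {B : Type*} (L : Set (ℕ → B)) : Prop :=
  ∃ Φ : Set (List B), L = {π | ∀ n : ℕ, wordPrefix π n ∈ Φ}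

/-- `L` is a guarantee property. -/
def IsGuaranteeProperty {B : Type*} (L : Set (ℕ → B)) : Prop :=
  ∃ Φ : Set (List B), L = {π | ∃ n : ℕ, wordPrefix π n ∈ Φ}

/-- `L` is a recurrence property. -/
def IsRecurrenceProperty {B : Type*} (L : Set (ℕ → B)) : Prop :=
  ∃ Φ : Set (List B), L = {π | {n : ℕ | wordPrefix π n ∈ Φ}.Infinite}

/-- `L` is a persistence property. -/
def IsPersistenceProperty {B : Type*} (L : Set (ℕ → B)) : Prop :=
  ∃ Φ : Set (List B), L = {π | {n : ℕ | wordPrefix π n ∈ Φ}.Finite}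

/-- The Cantor metric on the space of infinite words `ℕ → A`:
`dist π π' = (1/2)^j`, where `j` is the length of the longest common prefix of the
two words (and `dist π π' = 0` if they are equal). -/
noncomputable def cantorMetric (A : Type*) : MetricSpace (ℕ → A) :=
  @PiNat.metricSpaceOfDiscreteUniformity (fun _ => A) (fun _ => ⊥) (fun _ => rfl)

attribute [local instance] cantorMetric

section CantorAux

open Metric Set

variable {A B : Type*}

lemma wordPrefix_eq_iff {π π' : ℕ → A} {n : ℕ} :
    wordPrefix π n = wordPrefix π' n ↔ ∀ i < n, π i = π' i := by
  constructor
  · intro h i hi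
    have := congrArg (fun l => l.getD i (π i)) h
    simpa [wordPrefix, List.getD_eq_getElem?_getD, hi] using this
  · intro h
    unfold wordPrefix
    apply List.map_congr_left
    intro i hi
    exact h i (List.mem_range.1 hi)

lemma cantor_dist_le_iff {π π' : ℕ → B} {n : ℕ} :
    dist π π' ≤ (1 / 2) ^ n ↔ wordPrefix π n = wordPrefix π' n := by
  rw [wordPrefix_eq_iff]
  exact Iff.symm (PiNat.mem_cylinder_iff_dist_le (x := π') (y := π))

lemma prefix_eq_of_dist_lt {π π' : ℕ → B} {n : ℕ} (h : dist π π' < (1 / 2) ^ n) :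
    wordPrefix π n = wordPrefix π' n := by
  rw [wordPrefix_eq_iff]
  exact fun i hi => PiNat.apply_eq_of_dist_lt h hi.le

lemma wordPrefix_length (π : ℕ → A) (n : ℕ) : (wordPrefix π n).length = n := by
  simp [wordPrefix]

lemma mem_prefN {L : Set (ℕ → B)} {n : ℕ} {w : List B} :
    w ∈ prefN L n ↔ ∃ σ ∈ L, wordPrefix σ n = w := Iff.rfl

lemma prefWord_subset_iff {L : Set (ℕ → B)} {σ : ℕ → B} :
    prefWord σ ⊆ prefAll L ↔ ∀ n, ∃ τ ∈ L, wordPrefix τ n = wordPrefix σ n := by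
  constructor
  · intro h n
    have hmem : wordPrefix σ n ∈ prefAll L := h ⟨n, rfl⟩
    obtain ⟨m, τ, hτ, heq⟩ := Set.mem_iUnion.1 hmem
    have hmn : m = n := by
      have := congrArg List.length heq
      simpa [wordPrefix_length] using this
    exact ⟨τ, hτ, hmn ▸ heq⟩
  · rintro h w ⟨n, rfl⟩
    obtain ⟨τ, hτ, heq⟩ := h n
    exact Set.mem_iUnion.2 ⟨n, τ, hτ, heq⟩

lemma mem_closure_iff_prefix {S : Set (ℕ → B)} {σ : ℕ → B} :
    σ ∈ closure S ↔ ∀ n, ∃ τ ∈ S, wordPrefix τ n = wordPrefix σ n := by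
  rw [Metric.mem_closure_iff]
  constructor
  · intro h n
    obtain ⟨τ, hτ, hd⟩ := h ((1 / 2) ^ n) (by positivity)
    exact ⟨τ, hτ, (prefix_eq_of_dist_lt hd).symm⟩
  · intro h ε hε
    obtain ⟨n, hn⟩ : ∃ n : ℕ, (1 / 2 : ℝ) ^ n < ε :=
      exists_pow_lt_of_lt_one hε one_half_lt_one
    obtain ⟨τ, hτ, he⟩ := h n
    exact ⟨τ, hτ, lt_of_le_of_lt (cantor_dist_le_iff.2 he.symm) hn⟩

lemma cantor_completeSpace : CompleteSpace (ℕ → B) := by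
  refine Metric.complete_of_convergent_controlled_sequences
    (fun n => (1 / 2) ^ n) (fun n => by positivity) ?_
  intro u hu
  refine ⟨fun i => u i i, ?_⟩
  rw [Metric.tendsto_atTop]
  intro ε hε
  obtain ⟨k, hk⟩ : ∃ k : ℕ, (1 / 2 : ℝ) ^ k < ε :=
    exists_pow_lt_of_lt_one hε one_half_lt_one
  refine ⟨k, fun n hn => ?_⟩
  have hpre : wordPrefix (u n) k = wordPrefix (fun i => u i i) k := by
    rw [wordPrefix_eq_iff]
    intro i hi
    exact (PiNat.apply_eq_of_dist_lt (hu i i n le_rfl (hi.le.trans hn)) le_rfl).symm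
  exact lt_of_le_of_lt (cantor_dist_le_iff.2 hpre) hk

lemma totallyBounded_of_prefFinite {S : Set (ℕ → B)}
    (h : ∀ n, (prefN S n).Finite) : TotallyBounded S := by
  rw [Metric.totallyBounded_iff]
  intro ε hε
  obtain ⟨n, hn⟩ : ∃ n : ℕ, (1 / 2 : ℝ) ^ n < ε :=
    exists_pow_lt_of_lt_one hε one_half_lt_one
  classical
  have hch : ∀ w ∈ prefN S n, ∃ σ ∈ S, wordPrefix σ n = w := fun _ hw => hw
  choose g hgS hgw using hch
  have hfin : {y | ∃ w, ∃ hw : w ∈ prefN S n, g w hw = y}.Finite :=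
    (h n).dependent_image g
  refine ⟨_, hfin, fun σ hσ => ?_⟩
  have hw : wordPrefix σ n ∈ prefN S n := ⟨σ, hσ, rfl⟩
  refine Set.mem_biUnion ⟨wordPrefix σ n, hw, rfl⟩ ?_
  have hd : dist σ (g (wordPrefix σ n) hw) ≤ (1 / 2) ^ n :=
    cantor_dist_le_iff.2 (hgw _ hw).symm
  exact Metric.mem_ball.2 (lt_of_le_of_lt hd hn)

lemma prefFinite_of_totallyBounded {S : Set (ℕ → B)}
    (h : TotallyBounded S) (n : ℕ) : (prefN S n).Finite := by
  obtain ⟨t, htf, hts⟩ := Metric.totallyBounded_iff.1 h ((1 / 2) ^ n) (by positivity)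
  apply (htf.image (fun y => wordPrefix y n)).subset
  rintro w ⟨σ, hσ, rfl⟩
  obtain ⟨y, hy, hball⟩ := Set.mem_iUnion₂.1 (hts hσ)
  exact ⟨y, hy, (prefix_eq_of_dist_lt (Metric.mem_ball.1 hball)).symm⟩

lemma cantor_hausdorffDist_le {S T : Set (ℕ → B)} {n : ℕ}
    (h : prefN S n = prefN T n) : Metric.hausdorffDist S T ≤ (1 / 2) ^ n := by
  apply Metric.hausdorffDist_le_of_mem_dist (by positivity)
  · intro x hx
    obtain ⟨y, hy, hw⟩ := (h ▸ (⟨x, hx, rfl⟩ : wordPrefix x n ∈ prefN S n) :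
      wordPrefix x n ∈ prefN T n)
    exact ⟨y, hy, cantor_dist_le_iff.2 (by simpa using hw.symm)⟩
  · intro y hy
    obtain ⟨x, hx, hw⟩ := (h ▸ (⟨y, hy, rfl⟩ : wordPrefix y n ∈ prefN T n) :
      wordPrefix y n ∈ prefN S n)
    exact ⟨x, hx, cantor_dist_le_iff.2 (by simpa using hw.symm)⟩

lemma prefN_eq_of_hausdorffDist_lt {S T : Set (ℕ → B)} {n : ℕ}
    (hS : S.Nonempty) (hT : T.Nonempty)
    (hbS : Bornology.IsBounded S) (hbT : Bornology.IsBounded T)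
    (h : Metric.hausdorffDist S T < (1 / 2) ^ n) : prefN S n = prefN T n := by
  have fin : EMetric.hausdorffEdist S T ≠ ⊤ :=
    Metric.hausdorffEdist_ne_top_of_nonempty_of_bounded hS hT hbS hbT
  ext w
  simp only [prefN, Set.mem_image]
  constructor
  · rintro ⟨σ, hσ, rfl⟩
    obtain ⟨y, hy, hd⟩ := Metric.exists_dist_lt_of_hausdorffDist_lt hσ h fin
    exact ⟨y, hy, (prefix_eq_of_dist_lt hd).symm⟩
  · rintro ⟨σ, hσ, rfl⟩
    obtain ⟨y, hy, hd⟩ := Metric.exists_dist_lt_of_hausdorffDist_lt' hσ h fin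
    exact ⟨y, hy, prefix_eq_of_dist_lt hd⟩

end CantorAux

/-- A nonempty-valued `f : A^ω → 𝒫(B^ω)` is prefix-continuous, prefix-closed and
prefix-compact iff every `f π` is compact and the induced map `A^ω → 𝒦(B^ω)` is
continuous with respect to the Hausdorff metric. -/
theorem prefix_conditions_iff_hausdorff_continuous {A B : Type*}
    (f : (ℕ → A) → Set (ℕ → B)) (hne : ∀ π : ℕ → A, (f π).Nonempty) :
    (PrefixContinuous f ∧ PrefixClosed f ∧ PrefixCompact f) ↔
      ∃ hcomp : ∀ π : ℕ → A, IsCompact (f π),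
        Continuous (fun π : ℕ → A =>
          (⟨⟨f π, hcomp π⟩, hne π⟩ : TopologicalSpace.NonemptyCompacts (ℕ → B))) := by
  constructor
  · rintro ⟨hc, hcl, hk⟩
    have hclosed : ∀ π, IsClosed (f π) := by
      intro π
      refine isClosed_of_closure_subset fun σ hσ => ?_
      exact hcl π σ (prefWord_subset_iff.2 (mem_closure_iff_prefix.1 hσ))
    have hcomp : ∀ π, IsCompact (f π) := by
      intro π
      haveI : CompleteSpace (ℕ → B) := cantor_completeSpace
      exact TotallyBounded.isCompact_of_isClosed
        (totallyBounded_of_prefFinite fun n => hk n π) (hclosed π)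
    refine ⟨hcomp, ?_⟩
    rw [Metric.continuous_iff]
    intro π ε hε
    obtain ⟨n, hn⟩ : ∃ n : ℕ, (1 / 2 : ℝ) ^ n < ε :=
      exists_pow_lt_of_lt_one hε one_half_lt_one
    obtain ⟨m, hm⟩ := hc n π
    refine ⟨(1 / 2) ^ m, by positivity, fun π' hd => ?_⟩
    have hpre : prefN (f π') n = prefN (f π) n :=
      (hm π' (prefix_eq_of_dist_lt hd)).symm
    calc dist (⟨⟨f π', hcomp π'⟩, hne π'⟩ : TopologicalSpace.NonemptyCompacts (ℕ → B))
          ⟨⟨f π, hcomp π⟩, hne π⟩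
        = Metric.hausdorffDist (f π') (f π) := Metric.NonemptyCompacts.dist_eq
      _ ≤ (1 / 2) ^ n := cantor_hausdorffDist_le hpre
      _ < ε := hn
  · rintro ⟨hcomp, hcont⟩
    refine ⟨?_, ?_, ?_⟩
    · intro n π
      rw [Metric.continuous_iff] at hcont
      obtain ⟨δ, hδ, hδ'⟩ := hcont π ((1 / 2) ^ n) (by positivity)
      obtain ⟨m, hm⟩ : ∃ m : ℕ, (1 / 2 : ℝ) ^ m < δ :=
        exists_pow_lt_of_lt_one hδ one_half_lt_one
      refine ⟨m, fun π' hp => ?_⟩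
      have hdist : dist π' π < δ := lt_of_le_of_lt (cantor_dist_le_iff.2 hp) hm
      have hH := hδ' π' hdist
      rw [Metric.NonemptyCompacts.dist_eq] at hH
      exact (prefN_eq_of_hausdorffDist_lt (hne π') (hne π)
        (hcomp π').isBounded (hcomp π).isBounded hH).symm
    · intro π σ hσ
      have hc : σ ∈ closure (f π) :=
        mem_closure_iff_prefix.2 (prefWord_subset_iff.1 hσ)
      rwa [(hcomp π).isClosed.closure_eq] at hc
    · intro n π
      exact prefFinite_of_totallyBounded (hcomp π).totallyBounded n
end

section
/- Let A and B be types and let f : A^ω → 𝒫(B^ω) be prefix-continuous, prefix-closed, and prefix-compact. If L ⊆ B^ω is a safety property, then the universal preimage f_U^{-1}(L) is a safety property. -/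
/-- The universal preimage of a safety property under a prefix-continuous,
prefix-closed, prefix-compact function is a safety property. -/
theorem safety_closed_under_univPreimage {A B : Type*} (f : (ℕ → A) → Set (ℕ → B))
    (hcont : PrefixContinuous f) (hclosed : PrefixClosed f) (hcomp : PrefixCompact f)
    (L : Set (ℕ → B)) (hL : IsSafetyProperty L) :
    IsSafetyProperty (univPreimage f L) := by
  obtain ⟨Φ, hΦ⟩ := hL
  refine ⟨{w | ∃ π', wordPrefix π' w.length = w ∧ f π' ⊆ L}, ?_⟩
  ext π
  constructor
  · intro hπ n
    exact ⟨π, by simp [wordPrefix], hπ⟩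
  · intro hπ σ hσ
    rw [hΦ]
    intro n
    obtain ⟨m, hm⟩ := hcont n π
    obtain ⟨π', hpre, hsub⟩ := hπ m
    have hlen : (wordPrefix π m).length = m := by simp [wordPrefix]
    rw [hlen] at hpre
    have heq := hm π' hpre
    have hmem : wordPrefix σ n ∈ prefN (f π) n := ⟨σ, hσ, rfl⟩
    rw [heq] at hmem
    obtain ⟨τ, hτ, heqn⟩ := hmem
    have hτL := hsub hτ
    rw [hΦ] at hτL
    rw [← heqn]
    exact hτL n
end

section
/- Let A and B be types and let f : A^ω → 𝒫(B^ω) be prefix-continuous, prefix-closed, and prefix-compact. If L ⊆ B^ω is a guarantee property, then the universal preimage f_U^{-1}(L) is a guarantee property. -/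
/-!
A guarantee property is exactly a set that is open for the prefix topology: with each word it
contains every word sharing a long enough prefix. Let `L` be given by the prefixes `Φ` and let
`f π ⊆ L`. Prefix-compactness and prefix-closedness of `f π` let König's lemma bound the
witnesses uniformly: some `n` is such that every length-`n` prefix of a word of `f π` has a
prefix in `Φ`. Prefix-continuity gives `m` such that every `π'` agreeing with `π` up to `m` has
the same length-`n` prefixes, hence `f π' ⊆ L`.
-/

@[simp]
lemma length_wordPrefix {A : Type*} (π : ℕ → A) (n : ℕ) : (wordPrefix π n).length = n := by
  simp [wordPrefix]

lemma wordPrefix_take {A : Type*} (π : ℕ → A) (n k : ℕ) :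
    (wordPrefix π n).take k = wordPrefix π (min k n) := by
  simp [wordPrefix, ← List.map_take, List.take_range]

@[simp]
lemma getElem_wordPrefix {A : Type*} (π : ℕ → A) (n i : ℕ) (h : i < (wordPrefix π n).length) :
    (wordPrefix π n)[i] = π i := by
  simp [wordPrefix]

lemma exists_wordPrefix_eq {B : Type*} (w : ℕ → List B) (hlen : ∀ n, (w n).length = n)
    (htake : ∀ n m, n ≤ m → (w m).take n = w n) : ∃ σ : ℕ → B, ∀ n, wordPrefix σ n = w n := by
  refine ⟨fun k => (w (k + 1))[k]'(by simp [hlen]),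
    fun n => List.ext_getElem (by simp [hlen]) fun i hi _ => ?_⟩
  rw [length_wordPrefix] at hi
  simp [← htake (i + 1) n hi]

open CategoryTheory Opposite in
/-- König's lemma. -/
lemma exists_forall_wordPrefix_mem {B : Type*} (T : ℕ → Set (List B))
    (hfin : ∀ n, (T n).Finite) (hne : ∀ n, (T n).Nonempty)
    (hlen : ∀ n, ∀ w ∈ T n, w.length = n)
    (htake : ∀ n m, n ≤ m → ∀ w ∈ T m, w.take n ∈ T n) :
    ∃ σ : ℕ → B, ∀ n, wordPrefix σ n ∈ T n := by
  let F : ℕᵒᵖ ⥤ Type _ :=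
    { obj n := T n.unop
      map h := TypeCat.ofHom fun w => ⟨_, htake _ _ (leOfHom h.unop) w.1 w.2⟩
      map_id n := by
        ext w : 3
        exact Subtype.ext (List.take_of_length_le (hlen _ _ w.2).le)
      map_comp g h := by
        ext w : 3
        exact Subtype.ext (by simp [List.take_take, min_eq_left (leOfHom h.unop)]) }
  have : ∀ j, Finite (F.obj j) := fun j => (hfin j.unop).to_subtype
  have : ∀ j, Nonempty (F.obj j) := fun j => (hne j.unop).to_subtype
  obtain ⟨s, hs⟩ := nonempty_sections_of_finite_inverse_system F
  obtain ⟨σ, hσ⟩ := exists_wordPrefix_eq (fun n => (s (op n)).1) (fun n => hlen n _ (s (op n)).2)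
    fun n m hnm => congrArg Subtype.val (hs (homOfLE hnm).op)
  exact ⟨σ, fun n => hσ n ▸ (s (op n)).2⟩

lemma exists_forall_mem_prefN_exists_take_mem {B : Type*} {S : Set (ℕ → B)} {Φ : Set (List B)}
    (hfin : ∀ n, (prefN S n).Finite) (hclosed : ∀ σ, prefWord σ ⊆ prefAll S → σ ∈ S)
    (hS : S ⊆ {σ | ∃ n, wordPrefix σ n ∈ Φ}) :
    ∃ n, ∀ w ∈ prefN S n, ∃ k, w.take k ∈ Φ := by
  by_contra! hbad
  obtain ⟨σ, hσ⟩ := exists_forall_wordPrefix_mem (fun n => {w ∈ prefN S n | ∀ k, w.take k ∉ Φ})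
    (fun n => (hfin n).subset fun _ hw => hw.1) hbad
    (fun n w ⟨⟨ρ, _, hρ⟩, _⟩ => hρ ▸ length_wordPrefix ρ n)
    fun n m hnm w ⟨⟨ρ, hρS, hρ⟩, hw⟩ =>
      ⟨⟨ρ, hρS, by rw [← hρ, wordPrefix_take, min_eq_left hnm]⟩, fun k => by
        simpa [List.take_take] using hw (min k n)⟩
  have hσS : σ ∈ S := hclosed σ fun _ ⟨n, hw⟩ => Set.mem_iUnion.2 ⟨n, hw ▸ (hσ n).1⟩
  obtain ⟨n, hn⟩ := hS hσS
  exact (hσ n).2 n (by rwa [wordPrefix_take, min_self])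

lemma isGuaranteeProperty_iff {A : Type*} {P : Set (ℕ → A)} :
    IsGuaranteeProperty P ↔
      ∀ π ∈ P, ∃ m, ∀ π' : ℕ → A, wordPrefix π' m = wordPrefix π m → π' ∈ P := by
  constructor
  · rintro ⟨Φ, rfl⟩ π ⟨m, hm⟩
    exact ⟨m, fun π' hπ' => ⟨m, hπ' ▸ hm⟩⟩
  · intro hP
    refine ⟨{u | ∀ π' : ℕ → A, wordPrefix π' u.length = u → π' ∈ P}, Set.ext fun π => ⟨?_, ?_⟩⟩
    · intro hπ
      obtain ⟨m, hm⟩ := hP π hπ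
      exact ⟨m, by simpa using hm⟩
    · rintro ⟨m, hm⟩
      exact hm π (by simp)

/-- The universal preimage of a guarantee property under a prefix-continuous,
prefix-closed, prefix-compact function is a guarantee property. -/
theorem guarantee_closed_under_univPreimage {A B : Type*} (f : (ℕ → A) → Set (ℕ → B))
    (hcont : PrefixContinuous f) (hclosed : PrefixClosed f) (hcomp : PrefixCompact f)
    (L : Set (ℕ → B)) (hL : IsGuaranteeProperty L) :
    IsGuaranteeProperty (univPreimage f L) := by
  obtain ⟨Φ, rfl⟩ := hL
  refine isGuaranteeProperty_iff.2 fun π hπ => ?_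
  obtain ⟨n, hn⟩ := exists_forall_mem_prefN_exists_take_mem (hcomp · π) (hclosed π) hπ
  obtain ⟨m, hm⟩ := hcont n π
  refine ⟨m, fun π' hπ' σ hσ => ?_⟩
  obtain ⟨k, hk⟩ := hn _ (by rw [hm π' hπ']; exact ⟨σ, hσ, rfl⟩)
  exact ⟨min k n, wordPrefix_take σ n k ▸ hk⟩
end

section
/- Let T be a finite system with inputs I and outputs O, let π be a trace of T, let E ⊆ (ℕ → Set I × Set O) be an effect, and suppose C ⊆ (ℕ → Set I) is a cause of E on π in T with respect to the subset similarity relation. If E is a recurrence property, then C is a recurrence property. -/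
/-- A (finite-state) reactive system with states `S`, inputs `I` and outputs `O`. -/
structure FinSystem (S I O : Type*) where
  init : S
  tr : S → Set I → Set S
  lab : S → Set O

/-- `π` is a trace of the system `T`. -/
def IsTrace {S I O : Type*} (T : FinSystem S I O) (π : ℕ → Set I × Set O) : Prop :=
  ∃ s : ℕ → S, s 0 = T.init ∧
    ∀ n : ℕ, s (n + 1) ∈ T.tr (s n) (π n).1 ∧ (π n).2 = T.lab (s (n + 1))

/-- The input component of a trace. -/
def traceInputs {I O : Type*} (π : ℕ → Set I × Set O) : ℕ → Set I := fun n => (π n).1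

/-- The subset similarity relation relative to the observed trace `π`:
`σ` is at least as similar to `π` as the input sequence `ρ`. -/
def SubsetSim {I O : Type*} (π σ : ℕ → Set I × Set O) (ρ : ℕ → Set I) : Prop :=
  ∀ (n : ℕ) (i : I), ((i ∈ (σ n).1) ≠ (i ∈ (π n).1)) → ((i ∈ ρ n) ≠ (i ∈ (π n).1))

/-- The SAT condition. -/
def SatCond {S I O : Type*} (T : FinSystem S I O) (π : ℕ → Set I × Set O)
    (E : Set (ℕ → Set I × Set O)) (C : Set (ℕ → Set I)) : Prop :=
  ∀ π' : ℕ → Set I × Set O, IsTrace T π' → traceInputs π' = traceInputs π →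
    traceInputs π' ∈ C ∧ π' ∈ E

/-- The CF condition. -/
def CfCond {S I O : Type*} (T : FinSystem S I O) (π : ℕ → Set I × Set O)
    (E : Set (ℕ → Set I × Set O)) (C : Set (ℕ → Set I)) : Prop :=
  ∀ ρ : ℕ → Set I, ρ ∉ C → ∃ σ : ℕ → Set I × Set O,
    IsTrace T σ ∧ SubsetSim π σ ρ ∧ σ ∉ E

/-- `C` is a cause of the effect `E` on the trace `π` in the system `T`,
with respect to the subset similarity relation. -/
def IsCause {S I O : Type*} (T : FinSystem S I O) (π : ℕ → Set I × Set O)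
    (E : Set (ℕ → Set I × Set O)) (C : Set (ℕ → Set I)) : Prop :=
  SatCond T π E C ∧ CfCond T π E C ∧
    ¬ ∃ C' : Set (ℕ → Set I), C' ⊂ C ∧ SatCond T π E C' ∧ CfCond T π E C'

/-!
A cause with respect to subset similarity is unique: it is the set of input sequences all of
whose similar traces satisfy the effect. When the effect is a recurrence property, an input
sequence `ρ` belongs to this set iff for every `N` some prefix of `ρ` already rules out every
similar trace avoiding the effect kernel beyond time `N`; by König's lemma (compactness of the
finitely branching tree of runs) this is the only way a counter-trace can fail to exist. So the
cause is a countable intersection of guarantee properties, i.e. a `G_δ` set, and such sets are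
recurrence properties: the kernel records, for each `N`, the first time the prefix has entered
the first `N + 1` guarantee sets.
-/

section Prefix

variable {B : Type*}

theorem wordPrefix_eq_iff_s12 {f g : ℕ → B} {n : ℕ} :
    wordPrefix f n = wordPrefix g n ↔ ∀ k < n, f k = g k := by
  simp [wordPrefix, List.map_inj_left]

@[simp] theorem length_wordPrefix_s12 (f : ℕ → B) (n : ℕ) : (wordPrefix f n).length = n := by
  simp [wordPrefix]

def PrefixDetermined (P : ℕ → (ℕ → B) → Prop) : Prop :=
  ∀ n f g, (∀ k < n, f k = g k) → P n f → P n g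

theorem PrefixDetermined.not {P : ℕ → (ℕ → B) → Prop} (hP : PrefixDetermined P) :
    PrefixDetermined fun n f => ¬ P n f :=
  fun n f g hfg hf hg => hf (hP n g f (fun k hk => (hfg k hk).symm) hg)

def prefixLift (P : ℕ → (ℕ → B) → Prop) : Set (List B) :=
  {w | ∃ f, wordPrefix f w.length = w ∧ P w.length f}

theorem PrefixDetermined.wordPrefix_mem_prefixLift_iff {P : ℕ → (ℕ → B) → Prop}
    (hP : PrefixDetermined P) {f : ℕ → B} {n : ℕ} :
    wordPrefix f n ∈ prefixLift P ↔ P n f := by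
  simp only [prefixLift, Set.mem_ofPred_eq, length_wordPrefix_s12]
  exact ⟨fun ⟨g, hgf, hg⟩ => hP n g f (wordPrefix_eq_iff_s12.mp hgf) hg, fun hf => ⟨f, rfl, hf⟩⟩

theorem PrefixDetermined.isGuaranteeProperty {P : ℕ → (ℕ → B) → Prop}
    (hP : PrefixDetermined P) : IsGuaranteeProperty {f | ∃ n, P n f} :=
  ⟨prefixLift P, by simp only [hP.wordPrefix_mem_prefixLift_iff]⟩

/-- The first-entry-time argument: each `N` contributes at most one time, namely the first `n`
with `R N n f`, and that time is at least `N`. -/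
theorem isRecurrenceProperty_setOf_forall_exists (R : ℕ → ℕ → (ℕ → B) → Prop)
    (hdet : ∀ N, PrefixDetermined (R N))
    (hmono : ∀ N n n' f, n ≤ n' → R N n f → R N n' f)
    (hanti : ∀ N N' n f, N ≤ N' → R N' n f → R N n f)
    (hlen : ∀ N n f, R N n f → N ≤ n) :
    IsRecurrenceProperty {f | ∀ N, ∃ n, R N n f} := by
  classical
  let Entry : ℕ → ℕ → (ℕ → B) → Prop := fun N n f => R N n f ∧ ¬ R N (n - 1) f
  have hEntry : PrefixDetermined fun n f => ∃ N, Entry N n f := by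
    rintro n f g hfg ⟨N, hn, hn'⟩
    exact ⟨N, hdet N n f g hfg hn,
      (hdet N).not (n - 1) f g (fun k hk => hfg k (by omega)) hn'⟩
  refine ⟨prefixLift fun n f => ∃ N, Entry N n f, ?_⟩
  ext f
  simp only [hEntry.wordPrefix_mem_prefixLift_iff, Set.mem_ofPred_eq]
  constructor
  · intro hf
    refine Set.infinite_of_forall_exists_gt fun a => ?_
    have hfirst := Nat.find_spec (hf (a + 1))
    have hge := hlen _ _ _ hfirst
    exact ⟨_, ⟨a + 1, hfirst, Nat.find_min (hf (a + 1)) (by omega)⟩, by omega⟩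
  · intro hinf
    by_contra! hnot
    obtain ⟨N₀, hN₀⟩ := hnot
    have hsub : {n | ∃ N, Entry N n f} ⊆ ⋃ N ∈ Set.Iio N₀, {n | Entry N n f} := by
      rintro n ⟨N, hN⟩
      refine Set.mem_biUnion (Set.mem_Iio.mpr ?_) hN
      by_contra! hle
      exact hN₀ n (hanti _ _ _ _ hle hN.1)
    have hunique : ∀ N, {n | Entry N n f}.Subsingleton := by
      intro N n₁ h₁ n₂ h₂
      by_contra! hne
      rcases hne.lt_or_gt with hlt | hlt
      · exact h₂.2 (hmono _ _ _ _ (by omega) h₁.1)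
      · exact h₁.2 (hmono _ _ _ _ (by omega) h₂.1)
    exact hinf (((Set.finite_Iio N₀).biUnion fun N _ => (hunique N).finite).subset hsub)

theorem isRecurrenceProperty_iInter {G : ℕ → Set (ℕ → B)}
    (hG : ∀ N, IsGuaranteeProperty (G N)) : IsRecurrenceProperty (⋂ N, G N) := by
  choose Ψ hΨ using hG
  let R : ℕ → ℕ → (ℕ → B) → Prop := fun N n f =>
    N ≤ n ∧ ∀ M ≤ N, ∃ k ≤ n, wordPrefix f k ∈ Ψ M
  have hinter : ⋂ N, G N = {f | ∀ N, ∃ n, R N n f} := by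
    ext f
    simp only [Set.mem_iInter, hΨ, Set.mem_ofPred_eq]
    refine ⟨fun hf N => ?_, fun hf N => ?_⟩
    · choose k hk using hf
      obtain ⟨b, hb⟩ := ((Set.finite_Iic N).image k).bddAbove
      refine ⟨N + b, by omega, fun M hM => ⟨k M, ?_, hk M⟩⟩
      have := hb (Set.mem_image_of_mem k (Set.mem_Iic.mpr hM))
      omega
    · obtain ⟨n, -, hn⟩ := hf N
      obtain ⟨k, -, hk⟩ := hn N le_rfl
      exact ⟨k, hk⟩
  rw [hinter]
  refine isRecurrenceProperty_setOf_forall_exists R ?_ ?_ ?_ fun _ _ _ h => h.1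
  · rintro N n f g hfg ⟨hN, hhit⟩
    refine ⟨hN, fun M hM => ?_⟩
    obtain ⟨k, hk, hkΨ⟩ := hhit M hM
    refine ⟨k, hk, ?_⟩
    rwa [← wordPrefix_eq_iff_s12.mpr fun j hj => hfg j (by omega)]
  · rintro N n n' f hn ⟨hN, hhit⟩
    refine ⟨hN.trans hn, fun M hM => ?_⟩
    obtain ⟨k, hk, hkΨ⟩ := hhit M hM
    exact ⟨k, hk.trans hn, hkΨ⟩
  · rintro N N' n f hN ⟨hN', hhit⟩
    exact ⟨hN.trans hN', fun M hM => hhit M (hM.trans hN)⟩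

end Prefix

theorem isClosed_of_determined_by_prefix {X : Type*} [TopologicalSpace X] [DiscreteTopology X]
    (m : ℕ) (P : Set (ℕ → X)) (hP : ∀ y y', (∀ k < m, y k = y' k) → y ∈ P → y' ∈ P) :
    IsClosed P := by
  let r : (ℕ → X) → (Fin m → X) := fun y k => y k
  have hr : Continuous r := continuous_pi fun k => continuous_apply (k : ℕ)
  have hPr : P = r ⁻¹' (r '' P) := by
    refine Set.Subset.antisymm (Set.subset_preimage_image r P) ?_
    rintro y ⟨y', hy', hry⟩
    exact hP y' y (fun k hk => congrFun hry ⟨k, hk⟩) hy'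
  rw [hPr]
  exact (isClosed_discrete _).preimage hr

section Cause

variable {S I O : Type*} {T : FinSystem S I O} {π : ℕ → Set I × Set O}
  {E : Set (ℕ → Set I × Set O)} {C : Set (ℕ → Set I)}

def canonicalCause (T : FinSystem S I O) (π : ℕ → Set I × Set O)
    (E : Set (ℕ → Set I × Set O)) : Set (ℕ → Set I) :=
  {ρ | ∀ σ, IsTrace T σ → SubsetSim π σ ρ → σ ∈ E}

theorem SubsetSim.traceInputs_eq {σ : ℕ → Set I × Set O} (h : SubsetSim π σ (traceInputs π)) :
    traceInputs σ = traceInputs π := by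
  funext n
  ext i
  by_contra hne
  exact h n i (fun heq => hne (iff_of_eq heq)) rfl

theorem SatCond.canonicalCause (h : SatCond T π E C) : SatCond T π E (canonicalCause T π E) :=
  fun π' hπ' hin => ⟨fun σ hσ hsim => (h σ hσ (hin ▸ hsim).traceInputs_eq).2, (h π' hπ' hin).2⟩

theorem cfCond_canonicalCause : CfCond T π E (canonicalCause T π E) := by
  intro ρ hρ
  simpa [canonicalCause] using hρ

theorem CfCond.canonicalCause_subset (h : CfCond T π E C) : canonicalCause T π E ⊆ C := by
  intro ρ hρ
  by_contra hρC
  obtain ⟨σ, hσ, hsim, hσE⟩ := h ρ hρC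
  exact hσE (hρ σ hσ hsim)

theorem IsCause.eq_canonicalCause (h : IsCause T π E C) : C = canonicalCause T π E := by
  obtain ⟨hsat, hcf, hmin⟩ := h
  by_contra hne
  exact hmin ⟨_, ssubset_of_subset_of_ne hcf.canonicalCause_subset (Ne.symm hne),
    hsat.canonicalCause, cfCond_canonicalCause⟩

def CounterTraceUpTo (T : FinSystem S I O) (π : ℕ → Set I × Set O)
    (Φ : Set (List (Set I × Set O))) (N n : ℕ) (ρ : ℕ → Set I) : Prop :=
  ∃ σ, IsTrace T σ ∧
    (∀ k < n, ∀ i, (i ∈ (σ k).1) ≠ (i ∈ (π k).1) → (i ∈ ρ k) ≠ (i ∈ (π k).1)) ∧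
    ∀ m, N ≤ m → m ≤ n → wordPrefix σ m ∉ Φ

variable {Φ : Set (List (Set I × Set O))}

theorem prefixDetermined_counterTraceUpTo (N : ℕ) :
    PrefixDetermined (CounterTraceUpTo T π Φ N) := by
  rintro n ρ ρ' hρρ' ⟨σ, hσ, hsim, havoid⟩
  exact ⟨σ, hσ, fun k hk => hρρ' k hk ▸ hsim k hk, havoid⟩

/-- König's lemma, as compactness of the space of runs of `T` over a finite alphabet. -/
theorem exists_trace_avoiding_of_forall_counterTraceUpTo [Finite S] [Finite I] [Finite O]
    {N : ℕ} {ρ : ℕ → Set I} (h : ∀ n, CounterTraceUpTo T π Φ N n ρ) :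
    ∃ σ, IsTrace T σ ∧ SubsetSim π σ ρ ∧ ∀ m, N ≤ m → wordPrefix σ m ∉ Φ := by
  let _ : TopologicalSpace ((Set I × Set O) × S) := ⊥
  have : DiscreteTopology ((Set I × Set O) × S) := ⟨rfl⟩
  let F : ℕ → Set (ℕ → (Set I × Set O) × S) := fun n => {y |
    (y 0).2 = T.init ∧
    (∀ k < n, (y (k + 1)).2 ∈ T.tr (y k).2 (y k).1.1 ∧ (y k).1.2 = T.lab (y (k + 1)).2) ∧
    (∀ k < n, ∀ i, (i ∈ (y k).1.1) ≠ (i ∈ (π k).1) → (i ∈ ρ k) ≠ (i ∈ (π k).1)) ∧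
    ∀ m, N ≤ m → m ≤ n → wordPrefix (fun k => (y k).1) m ∉ Φ}
  have hclosed : ∀ n, IsClosed (F n) := by
    refine fun n => isClosed_of_determined_by_prefix (n + 1) _ fun y y' hyy' => ?_
    rintro ⟨h0, hrun, hsim, havoid⟩
    refine ⟨hyy' 0 (by omega) ▸ h0, fun k hk => ?_, fun k hk => ?_, fun m hNm hmn => ?_⟩
    · rw [← hyy' k (by omega), ← hyy' (k + 1) (by omega)]
      exact hrun k hk
    · rw [← hyy' k (by omega)]
      exact hsim k hk
    · have hpre : wordPrefix (fun k => (y' k).1) m = wordPrefix (fun k => (y k).1) m :=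
        wordPrefix_eq_iff_s12.mpr fun k hk => by rw [hyy' k (by omega)]
      exact hpre ▸ havoid m hNm hmn
  have hanti : ∀ n, F (n + 1) ⊆ F n := by
    rintro n y ⟨h0, hrun, hsim, havoid⟩
    exact ⟨h0, fun k hk => hrun k (by omega), fun k hk => hsim k (by omega),
      fun m hNm hmn => havoid m hNm (by omega)⟩
  have hne : ∀ n, (F n).Nonempty := by
    intro n
    obtain ⟨σ, ⟨s, hs0, hstep⟩, hsim, havoid⟩ := h n
    exact ⟨fun k => (σ k, s k), hs0, fun k _ => hstep k, hsim, havoid⟩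
  have : CompactSpace ((Set I × Set O) × S) := Finite.compactSpace
  obtain ⟨y, hy⟩ := IsCompact.nonempty_iInter_of_sequence_nonempty_isCompact_isClosed
    F hanti hne (hclosed 0).isCompact hclosed
  simp only [Set.mem_iInter] at hy
  exact ⟨fun k => (y k).1, ⟨fun k => (y k).2, (hy 0).1, fun k => (hy (k + 1)).2.1 k (by omega)⟩,
    fun k => (hy (k + 1)).2.2.1 k (by omega), fun m hNm => (hy m).2.2.2 m hNm le_rfl⟩

theorem canonicalCause_recurrence_eq_iInter [Finite S] [Finite I] [Finite O] :
    canonicalCause T π {σ | {n | wordPrefix σ n ∈ Φ}.Infinite} =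
      ⋂ N, {ρ | ∃ n, ¬ CounterTraceUpTo T π Φ N n ρ} := by
  ext ρ
  simp only [canonicalCause, Set.mem_iInter, Set.mem_ofPred_eq]
  constructor
  · intro hρ N
    by_contra! hcounter
    obtain ⟨σ, hσ, hsim, havoid⟩ := exists_trace_avoiding_of_forall_counterTraceUpTo hcounter
    obtain ⟨m, hmΦ, hNm⟩ := (hρ σ hσ hsim).exists_gt N
    exact havoid m hNm.le hmΦ
  · intro hρ σ hσ hsim
    by_contra hfin
    obtain ⟨b, hb⟩ := (Set.not_infinite.mp hfin).bddAbove
    obtain ⟨n, hn⟩ := hρ (b + 1)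
    exact hn ⟨σ, hσ, fun k _ => hsim k, fun m hbm _ hmΦ => absurd (hb hmΦ) (by omega)⟩

end Cause

theorem cause_recurrence_general {S I O : Type*} [Fintype S] [Fintype I] [Fintype O]
    (T : FinSystem S I O) (π : ℕ → Set I × Set O)
    (E : Set (ℕ → Set I × Set O)) (C : Set (ℕ → Set I)) (hC : IsCause T π E C)
    (hE : IsRecurrenceProperty E) : IsRecurrenceProperty C := by
  obtain ⟨Φ, rfl⟩ := hE
  rw [hC.eq_canonicalCause, canonicalCause_recurrence_eq_iInter]
  exact isRecurrenceProperty_iInter fun N =>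
    (prefixDetermined_counterTraceUpTo N).not.isGuaranteeProperty

/-- If the effect is a recurrence property, then its cause is a recurrence property. -/
theorem cause_recurrence {S I O : Type*} [Fintype S] [Fintype I] [Fintype O]
    (T : FinSystem S I O) (π : ℕ → Set I × Set O) (hπ : IsTrace T π)
    (E : Set (ℕ → Set I × Set O)) (C : Set (ℕ → Set I)) (hC : IsCause T π E C)
    (hE : IsRecurrenceProperty E) : IsRecurrenceProperty C :=
  cause_recurrence_general T π E C hC hE
end

section
/- There exist a finite system T with inputs I and outputs O, a trace π of T, and an effect E ⊆ (ℕ → Set I × Set O) that is an obligation property (in fact, the union of a safety property and a guarantee property), such that some C ⊆ (ℕ → Set I) is a cause of E on π in T with respect to the subset similarity relation and C is not an obligation property. -/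
/-- Obligation properties: the smallest collection of subsets of `B^ω` containing all
safety and all guarantee properties and closed under complement and finite unions. -/
inductive IsObligationProperty {B : Type*} : Set (ℕ → B) → Prop
  | safety (L : Set (ℕ → B)) : IsSafetyProperty L → IsObligationProperty L
  | guarantee (L : Set (ℕ → B)) : IsGuaranteeProperty L → IsObligationProperty L
  | compl (L : Set (ℕ → B)) : IsObligationProperty L → IsObligationProperty Lᶜ
  | union (L₁ L₂ : Set (ℕ → B)) : IsObligationProperty L₁ → IsObligationProperty L₂ →
      IsObligationProperty (L₁ ∪ L₂)

/-!
In the product topology on words over a discrete alphabet, safety properties are `Gδ` (intersections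
of clopen prefix conditions) and guarantee properties are open, so every obligation property `L`
has both `L` and `Lᶜ` of type `Gδ`. The set of input sequences with infinitely many active inputs
is a dense `Gδ` whose complement is dense as well, so by the Baire category theorem its complement
cannot be `Gδ`: it is not an obligation property.

It is nevertheless a cause in the universal system over one input and one output bit, for the
effect "the output is always on, or at some point an active input meets an inactive output or an
inactive output is followed by an active one". A trace avoiding the effect eventually has its
inputs and outputs off, so to leave the effect a counterfactual must switch off all but finitely
many inputs of the observed (all-on) trace; hence every set satisfying CF contains the cause.
-/

open Filter Set

section Prefixes

variable {B : Type*}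

lemma wordPrefix_eq_iff_mem_cylinder {x y : ℕ → B} {n : ℕ} :
    wordPrefix y n = wordPrefix x n ↔ y ∈ PiNat.cylinder x n := by
  simp [wordPrefix, List.map_inj_left, PiNat.mem_cylinder_iff]

@[simp]
lemma getElem_wordPrefix_s13 (π : ℕ → B) (n k : ℕ) (hk : k < (wordPrefix π n).length) :
    (wordPrefix π n)[k] = π k := by
  simp [wordPrefix]

lemma isSafetyProperty_setOf_forall (P : B → Prop) :
    IsSafetyProperty {π : ℕ → B | ∀ k, P (π k)} := by
  refine ⟨{w | ∀ b ∈ w, P b}, ?_⟩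
  ext π
  simp only [wordPrefix, mem_ofPred_eq, List.forall_mem_map, List.mem_range]
  exact ⟨fun h _ k _ => h k, fun h k => h (k + 1) k k.lt_succ_self⟩

lemma isGuaranteeProperty_setOf_exists (R : B → B → Prop) :
    IsGuaranteeProperty {π : ℕ → B | ∃ k, R (π k) (π (k + 1))} := by
  refine ⟨{w | ∃ k, ∃ hk : k + 1 < w.length, R w[k] w[k + 1]}, ?_⟩
  ext π
  simp only [mem_ofPred_eq, getElem_wordPrefix_s13]
  refine ⟨fun ⟨k, hk⟩ => ⟨k + 2, k, by simp [wordPrefix], hk⟩, fun ⟨_, k, _, hk⟩ => ⟨k, hk⟩⟩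

lemma IsSafetyProperty.compl {L : Set (ℕ → B)} (h : IsSafetyProperty L) :
    IsGuaranteeProperty Lᶜ := by
  obtain ⟨Φ, rfl⟩ := h
  exact ⟨Φᶜ, by ext π; simp⟩

lemma IsGuaranteeProperty.compl {L : Set (ℕ → B)} (h : IsGuaranteeProperty L) :
    IsSafetyProperty Lᶜ := by
  obtain ⟨Φ, rfl⟩ := h
  exact ⟨Φᶜ, by ext π; simp⟩

end Prefixes

section Topology

variable {B : Type*} [TopologicalSpace B] [DiscreteTopology B]

lemma isOpen_setOf_wordPrefix_mem (Φ : Set (List B)) (n : ℕ) :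
    IsOpen {π : ℕ → B | wordPrefix π n ∈ Φ} := by
  refine isOpen_iff_forall_mem_open.mpr fun π hπ => ⟨PiNat.cylinder π n, ?_,
    PiNat.isOpen_cylinder _ π n, PiNat.self_mem_cylinder π n⟩
  intro σ hσ
  rwa [mem_ofPred_eq, wordPrefix_eq_iff_mem_cylinder.mpr hσ]

lemma IsSafetyProperty.isGδ {L : Set (ℕ → B)} (h : IsSafetyProperty L) : IsGδ L := by
  obtain ⟨Φ, rfl⟩ := h
  rw [ofPred_forall]
  exact .iInter_of_isOpen fun n => isOpen_setOf_wordPrefix_mem Φ n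

lemma IsGuaranteeProperty.isOpen {L : Set (ℕ → B)} (h : IsGuaranteeProperty L) : IsOpen L := by
  obtain ⟨Φ, rfl⟩ := h
  rw [ofPred_exists]
  exact isOpen_iUnion fun n => isOpen_setOf_wordPrefix_mem Φ n

lemma IsObligationProperty.isGδ_and_isGδ_compl {L : Set (ℕ → B)} (h : IsObligationProperty L) :
    IsGδ L ∧ IsGδ Lᶜ := by
  induction h with
  | safety L hL => exact ⟨hL.isGδ, hL.compl.isOpen.isGδ⟩
  | guarantee L hL => exact ⟨hL.isOpen.isGδ, hL.compl.isGδ⟩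
  | compl L _ ih => exact ⟨ih.2, by rw [compl_compl]; exact ih.1⟩
  | union L₁ L₂ _ _ ih₁ ih₂ =>
    exact ⟨ih₁.1.union ih₂.1, by rw [compl_union]; exact ih₁.2.inter ih₂.2⟩

lemma isGδ_setOf_frequently_mem (P : Set B) :
    IsGδ {ρ : ℕ → B | ∃ᶠ n in atTop, ρ n ∈ P} := by
  have : {ρ : ℕ → B | ∃ᶠ n in atTop, ρ n ∈ P} =
      ⋂ N : ℕ, ⋃ m ≥ N, (fun ρ : ℕ → B => ρ m) ⁻¹' P := by
    ext
    simp [frequently_atTop]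
  rw [this]
  exact .iInter_of_isOpen fun _ => isOpen_biUnion fun m _ =>
    (isOpen_discrete P).preimage (continuous_apply m)

lemma dense_setOf_eventually_eq (c : B) : Dense {ρ : ℕ → B | ∀ᶠ n in atTop, ρ n = c} := by
  refine (PiNat.isTopologicalBasis_cylinders fun _ => B).dense_iff.mpr ?_
  rintro _ ⟨x, n, rfl⟩ -
  refine ⟨fun m => if m < n then x m else c, ?_, ?_⟩
  · exact PiNat.mem_cylinder_iff.mpr fun i hi => if_pos hi
  · exact eventually_atTop.mpr ⟨n, fun m hm => if_neg (not_lt.mpr hm)⟩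

end Topology

theorem not_isObligationProperty_setOf_frequently_mem {B : Type*} {P : Set B} {a b : B}
    (ha : a ∈ P) (hb : b ∉ P) : ¬ IsObligationProperty {ρ : ℕ → B | ∃ᶠ n in atTop, ρ n ∈ P} := by
  let _ : TopologicalSpace B := ⊥
  have : DiscreteTopology B := ⟨rfl⟩
  have : Nonempty B := ⟨a⟩
  set C := {ρ : ℕ → B | ∃ᶠ n in atTop, ρ n ∈ P}
  have hC : Dense C := (dense_setOf_eventually_eq a).mono fun ρ hρ =>
    (hρ.mono fun n hn => hn ▸ ha).frequently
  have hCc : Dense Cᶜ := (dense_setOf_eventually_eq b).mono fun ρ hρ =>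
    not_frequently.mpr (hρ.mono fun n hn => hn ▸ hb)
  intro hobl
  have : Dense (C ∩ Cᶜ) :=
    Dense.inter_of_Gδ (isGδ_setOf_frequently_mem P) hobl.isGδ_and_isGδ_compl.2 hC hCc
  simpa using this.nonempty

def FinSystem.universal (I O : Type*) : FinSystem (Set O) I O where
  init := ∅
  tr _ _ := univ
  lab := id

lemma FinSystem.isTrace_universal {I O : Type*} (σ : ℕ → Set I × Set O) :
    IsTrace (FinSystem.universal I O) σ :=
  ⟨fun n => n.casesOn ∅ fun k => (σ k).2, rfl, fun _ => ⟨mem_univ _, rfl⟩⟩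

namespace ObligationCounterexample

/- A bit is a subset of `Unit`, set iff it contains `()`. -/

def observed : ℕ → Set Unit × Set Unit := fun _ => (univ, univ)

def outputAlwaysOn : Set (ℕ → Set Unit × Set Unit) := {σ | ∀ k, () ∈ (σ k).2}

def glitch : Set (ℕ → Set Unit × Set Unit) :=
  {σ | ∃ k, (() ∈ (σ k).1 ∧ () ∉ (σ k).2) ∨ (() ∉ (σ k).2 ∧ () ∈ (σ (k + 1)).2)}

def effect : Set (ℕ → Set Unit × Set Unit) := outputAlwaysOn ∪ glitch

def cause : Set (ℕ → Set Unit) := {ρ | ∃ᶠ n in atTop, () ∈ ρ n}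

lemma isSafetyProperty_outputAlwaysOn : IsSafetyProperty outputAlwaysOn :=
  isSafetyProperty_setOf_forall fun p : Set Unit × Set Unit => () ∈ p.2

lemma isGuaranteeProperty_glitch : IsGuaranteeProperty glitch :=
  isGuaranteeProperty_setOf_exists fun p q : Set Unit × Set Unit =>
    (() ∈ p.1 ∧ () ∉ p.2) ∨ (() ∉ p.2 ∧ () ∈ q.2)

lemma eventually_off_of_notMem_effect {σ : ℕ → Set Unit × Set Unit} (h : σ ∉ effect) :
    ∀ᶠ n in atTop, () ∉ (σ n).1 ∧ () ∉ (σ n).2 := by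
  simp only [effect, outputAlwaysOn, glitch, mem_union, mem_ofPred_eq, not_or, not_forall,
    not_exists, not_and, not_not] at h
  obtain ⟨⟨k₀, hk₀⟩, hglitch⟩ := h
  have hoff : ∀ n, k₀ ≤ n → () ∉ (σ n).2 :=
    Nat.le_induction hk₀ fun n _ hn => (hglitch n).2 hn
  exact eventually_atTop.mpr
    ⟨k₀, fun n hn => ⟨fun hin => hoff n hn ((hglitch n).1 hin), hoff n hn⟩⟩

lemma satCond : SatCond (FinSystem.universal Unit Unit) observed effect cause := by
  intro π' _ hin
  have hon : ∀ n, () ∈ (π' n).1 := fun n => by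
    simp [show (π' n).1 = univ from congrFun hin n]
  refine ⟨Frequently.of_forall hon, ?_⟩
  by_cases hout : ∀ k, () ∈ (π' k).2
  · exact Or.inl hout
  · obtain ⟨k, hk⟩ := not_forall.mp hout
    exact Or.inr ⟨k, Or.inl ⟨hon k, hk⟩⟩

lemma cfCond : CfCond (FinSystem.universal Unit Unit) observed effect cause := by
  intro ρ hρ
  obtain ⟨n₀, hn₀⟩ := eventually_atTop.mp (not_frequently.mp hρ)
  refine ⟨fun m => (ρ m, {_u | m < n₀}), FinSystem.isTrace_universal _, fun _ _ h => h, ?_⟩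
  rintro (hon | ⟨k, ⟨hin, hout⟩ | ⟨hout, hout'⟩⟩)
  · exact lt_irrefl n₀ (hon n₀)
  · exact hn₀ k (not_lt.mp hout) hin
  · exact hout (lt_trans k.lt_succ_self hout')

lemma cause_subset_of_cfCond {C : Set (ℕ → Set Unit)}
    (hC : CfCond (FinSystem.universal Unit Unit) observed effect C) :
    cause ⊆ C := by
  intro ρ hρ
  by_contra hρC
  obtain ⟨σ, -, hsim, hσ⟩ := hC ρ hρC
  obtain ⟨n, hρn, hσn, -⟩ := (hρ.and_eventually (eventually_off_of_notMem_effect hσ)).exists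
  simpa [observed, hρn, hσn] using hsim n ()

lemma isCause : IsCause (FinSystem.universal Unit Unit) observed effect cause :=
  ⟨satCond, cfCond, fun ⟨_, hss, _, hcf⟩ => hss.not_superset (cause_subset_of_cfCond hcf)⟩

end ObligationCounterexample

/-- There is an obligation effect (a union of a safety and a guarantee property) whose cause,
with respect to the subset similarity relation, is not an obligation property. -/
theorem obligation_not_closed_under_causality :
    ∃ (S I O : Type) (_ : Fintype S) (_ : Fintype I) (_ : Fintype O)
      (T : FinSystem S I O) (π : ℕ → Set I × Set O) (_ : IsTrace T π)
      (E : Set (ℕ → Set I × Set O)) (C : Set (ℕ → Set I)),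
      (∃ L₁ L₂ : Set (ℕ → Set I × Set O),
        IsSafetyProperty L₁ ∧ IsGuaranteeProperty L₂ ∧ E = L₁ ∪ L₂) ∧
      IsCause T π E C ∧ ¬ IsObligationProperty C :=
  ⟨Set Unit, Unit, Unit, inferInstance, inferInstance, inferInstance,
    FinSystem.universal Unit Unit, ObligationCounterexample.observed,
    FinSystem.isTrace_universal _, ObligationCounterexample.effect, ObligationCounterexample.cause,
    ⟨_, _, ObligationCounterexample.isSafetyProperty_outputAlwaysOn,
      ObligationCounterexample.isGuaranteeProperty_glitch, rfl⟩,
    ObligationCounterexample.isCause,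
    not_isObligationProperty_setOf_frequently_mem (P := {s | () ∈ s}) (a := univ) (b := ∅)
      (mem_univ ()) (notMem_empty ())⟩
end

section
/- Let E := {σ : ℕ → Bool | ∀ n, σ n = true} ∪ {σ : ℕ → Bool | ∃ n, σ n = false ∧ σ (n+1) = true}. Then {ρ : ℕ → Bool | ∀ σ : ℕ → Bool, (∀ n, ρ n = true → σ n = true) → σ ∈ E} = {ρ : ℕ → Bool | {n | ρ n = true} is infinite}. -/
/-- For the effect `E = (□a) ∨ ◊(¬a ∧ ◯a)` on the observed trace `a^ω` in the trivial
system, the cause (the set of traces all of whose at-least-as-similar traces satisfy `E`)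
is exactly the recurrence property `□◊a`. -/
theorem cause_of_obligation_is_recurrence :
    {ρ : ℕ → Bool | ∀ σ : ℕ → Bool, (∀ n, ρ n = true → σ n = true) →
        σ ∈ ({σ : ℕ → Bool | ∀ n, σ n = true} ∪
             {σ : ℕ → Bool | ∃ n, σ n = false ∧ σ (n + 1) = true})} =
      {ρ : ℕ → Bool | {n : ℕ | ρ n = true}.Infinite} := by
  classical
  ext ρ
  simp only [Set.mem_setOf_eq, Set.mem_union]
  constructor
  · intro h
    by_contra hfin
    rw [Set.not_infinite] at hfin
    obtain ⟨N, hN⟩ := hfin.bddAbove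
    set σ : ℕ → Bool := fun n => decide (n ≤ N) with hσdef
    have hmem := h σ (fun n hn => by
      have : n ≤ N := hN hn
      simp [hσdef, this])
    rcases hmem with hall | ⟨n, h1, h2⟩
    · have := hall (N + 1)
      simp [hσdef] at this
    · simp [hσdef] at h1 h2
      omega
  · intro hinf σ hσ
    by_cases hall : ∀ n, σ n = true
    · left; exact hall
    · right
      push_neg at hall
      obtain ⟨m, hm⟩ := hall
      have hm' : σ m = false := by simpa using hm
      have hex : ∃ k, m < k ∧ σ k = true := by
        obtain ⟨n, hn, hne⟩ := hinf.exists_gt m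
        exact ⟨n, hne, hσ n hn⟩
      set k := Nat.find hex with hkdef
      have hk := Nat.find_spec hex
      refine ⟨k - 1, ?_, ?_⟩
      · rcases Nat.lt_or_ge m (k - 1) with h | h
        · by_contra hc
          have hc' : σ (k - 1) = true := by simpa using hc
          exact Nat.find_min hex (show k - 1 < k by omega) ⟨h, hc'⟩
        · have heq : k - 1 = m := by omega
          rw [heq]; exact hm'
      · have heq : k - 1 + 1 = k := by omega
        rw [heq]; exact hk.2
end

section
/- The set {x : ℕ → Bool | {n | x n = true} is infinite} is not an Fσ subset of the Cantor space ℕ → Bool; that is, it is not equal to any countable union of closed sets with respect to the product topology on ℕ → Bool, Bool carrying the discrete topology. -/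
open Set Topology

/-- In any nonempty open set of the Cantor space we can find a point that is
eventually equal to a fixed boolean `b`. -/
lemma cantor_eventually_const_mem (b : Bool) (U : Set (ℕ → Bool)) (hU : IsOpen U)
    (hne : U.Nonempty) : ∃ x ∈ U, ∃ N, ∀ n ≥ N, x n = b := by
  classical
  obtain ⟨f, hf⟩ := hne
  obtain ⟨I, u, hIu, hsub⟩ := isOpen_pi_iff.mp hU f hf
  refine ⟨fun n => if n ∈ I then f n else b, hsub ?_, (I.sup id) + 1, ?_⟩
  · intro a ha
    have haI : a ∈ I := ha
    simpa [haI] using (hIu a haI).2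
  · intro n hn
    have hnI : n ∉ I := by
      intro h
      have := Finset.le_sup (f := id) h
      simp only [id] at this
      omega
    simp [hnI]

/-- The set of binary sequences taking the value `true` infinitely often is not an
Fσ subset of the Cantor space `ℕ → Bool`, i.e., it is not a countable union of sets
that are closed in the product topology (with `Bool` discrete). -/
theorem infinitely_often_not_Fsigma :
    ¬ ∃ F : ℕ → Set (ℕ → Bool), (∀ n, IsClosed (F n)) ∧
      {x : ℕ → Bool | {n : ℕ | x n = true}.Infinite} = ⋃ n, F n := by
  rintro ⟨F, hFc, hEq⟩
  set S : Set (ℕ → Bool) := {x | {n : ℕ | x n = true}.Infinite} with hSdef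
  -- The complement of S is also a countable union of closed sets
  set G : ℕ → Set (ℕ → Bool) := fun k => ⋂ n, {x : ℕ → Bool | x (k + n) = false} with hGdef
  have hGc : ∀ k, IsClosed (G k) := fun k =>
    isClosed_iInter fun n => isClosed_eq (continuous_apply (k + n)) continuous_const
  have hGU : ⋃ k, G k = Sᶜ := by
    ext x
    simp only [hGdef, mem_iUnion, mem_iInter, mem_setOf_eq, mem_compl_iff, hSdef,
      Set.not_infinite]
    constructor
    · rintro ⟨k, hk⟩
      refine (Set.finite_Iio k).subset fun n hn => ?_
      simp only [mem_setOf_eq] at hn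
      by_contra h
      simp only [mem_Iio, not_lt] at h
      have := hk (n - k)
      rw [Nat.add_sub_cancel' h] at this
      simp [hn] at this
    · intro hfin
      obtain ⟨k, hk⟩ := hfin.bddAbove
      refine ⟨k + 1, fun n => ?_⟩
      by_contra h
      simp only [Bool.not_eq_false] at h
      have := hk (show (k + 1 + n) ∈ {n | x n = true} from h)
      omega
  -- S is dense
  have hSdense : Dense S := by
    rw [dense_iff_inter_open]
    intro U hU hne
    obtain ⟨x, hxU, N, hx⟩ := cantor_eventually_const_mem true U hU hne
    exact ⟨x, hxU, (Set.Ici_infinite N).mono fun n hn => hx n hn⟩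
  -- Sᶜ is dense
  have hScdense : Dense Sᶜ := by
    rw [dense_iff_inter_open]
    intro U hU hne
    obtain ⟨x, hxU, N, hx⟩ := cantor_eventually_const_mem false U hU hne
    refine ⟨x, hxU, ?_⟩
    simp only [mem_compl_iff, hSdef, mem_setOf_eq, Set.not_infinite]
    refine (Set.finite_Iio N).subset fun n hn => ?_
    simp only [mem_setOf_eq] at hn
    by_contra h
    simp only [mem_Iio, not_lt] at h
    have := hx n h
    simp [hn] at this
  -- Combine via Baire category
  set f : ℕ ⊕ ℕ → Set (ℕ → Bool) := Sum.elim (fun n => (F n)ᶜ) (fun k => (G k)ᶜ) with hfdef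
  have hopen : ∀ i, IsOpen (f i) := by
    rintro (n | k)
    · exact (hFc n).isOpen_compl
    · exact (hGc k).isOpen_compl
  have hdense : ∀ i, Dense (f i) := by
    rintro (n | k)
    · refine hScdense.mono ?_
      show Sᶜ ⊆ (F n)ᶜ
      rw [compl_subset_compl, hEq]
      exact subset_iUnion F n
    · refine hSdense.mono ?_
      show S ⊆ (G k)ᶜ
      rw [← compl_compl S, compl_subset_compl, ← hGU]
      exact subset_iUnion G k
  have hd : Dense (⋂ i, f i) := dense_iInter_of_isOpen hopen hdense
  obtain ⟨x, hx⟩ := hd.nonempty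
  simp only [mem_iInter] at hx
  have hxS : x ∉ S := by
    rw [hEq]
    simp only [mem_iUnion, not_exists]
    exact fun n => hx (Sum.inl n)
  have hxSc : x ∉ Sᶜ := by
    rw [← hGU]
    simp only [mem_iUnion, not_exists]
    exact fun k => hx (Sum.inr k)
  exact hxSc hxS
end

section
/- Let n be a positive natural number, let Γ := Option Bool (where some b encodes the binary letter b and none encodes the letter #), and let L_n be as defined. Then every nondeterministic finite automaton M over the alphabet Γ with a finite state type Q such that M.accepts = L_n satisfies Fintype.card Q ≥ Nat.choose (2^n) (2^(n−1)). -/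
/-- The length-`n` factors of `w` starting at a position divisible by `n`:
for `(k+1)·n ≤ |w|`, the block `[w.get (k·n), …, w.get ((k+1)·n − 1)]`,
here written as `(w.drop (k·n)).take n`. -/
def subwordN {Γ : Type*} (n : ℕ) (w : List Γ) : Set (List Γ) :=
  {u | ∃ k : ℕ, (k + 1) * n ≤ w.length ∧ u = (w.drop (k * n)).take n}

/-- The language `L_n` over `Option Bool` (where `some b` encodes the binary letter `b`
and `none` encodes `#`): the finite words in which every binary word of length `n`
occurs as a block starting at a position divisible by `n`. -/
def LnLang (n : ℕ) : Set (List (Option Bool)) :=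
  {w | ∀ v : List Bool, v.length = n → v.map some ∈ subwordN n w}
/-! A fooling-set argument. For a set `S` of `2^(n-1)` binary words of length `n`, let `x_S` and
`y_S` list, block after block, the words in `S` and in its complement. Then `x_S y_T ∈ L_n` iff
`T ⊆ S`, i.e. iff `S = T`, since the sets have the same size. Hence a state reached by `x_S` from
which `y_S` is accepted determines `S`: otherwise `x_S y_T` and `x_T y_S` would both be accepted. -/

namespace NFA

variable {α σ : Type*} (M : NFA α σ)

theorem append_mem_accepts_iff {x y : List α} :
    x ++ y ∈ M.accepts ↔ ∃ q ∈ M.eval x, y ∈ M.acceptsFrom {q} := by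
  simp only [mem_accepts, evalFrom_append, mem_acceptsFrom, eval,
    mem_evalFrom_iff_exists (S := M.evalFrom _ x)]
  tauto

theorem card_le_card_of_fooling [Fintype σ] {ι : Type*} [Fintype ι] (x y : ι → List α)
    (h_mem : ∀ i, x i ++ y i ∈ M.accepts)
    (h_fool : ∀ i j, x i ++ y j ∈ M.accepts → x j ++ y i ∈ M.accepts → i = j) :
    Fintype.card ι ≤ Fintype.card σ := by
  choose q hq_eval hq_accepts using fun i => M.append_mem_accepts_iff.1 (h_mem i)
  refine Fintype.card_le_of_injective q fun i j hij => h_fool i j ?_ ?_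
  · exact M.append_mem_accepts_iff.2 ⟨q i, hq_eval i, hij ▸ hq_accepts j⟩
  · exact M.append_mem_accepts_iff.2 ⟨q j, hq_eval j, hij ▸ hq_accepts i⟩

end NFA

namespace List

variable {α : Type*} {n : ℕ} {L : List (List α)}

theorem length_flatten_of_forall_length_eq (h : ∀ l ∈ L, l.length = n) :
    L.flatten.length = L.length * n := by
  rw [length_flatten, map_congr_left h, map_const', sum_replicate, smul_eq_mul]

theorem drop_flatten_of_forall_length_eq (h : ∀ l ∈ L, l.length = n) (k : ℕ) :
    L.flatten.drop (k * n) = (L.drop k).flatten := by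
  induction L generalizing k with
  | nil => simp
  | cons a L ih =>
    cases k with
    | zero => simp
    | succ k =>
      have ha : a.length = n := h a mem_cons_self
      rw [show (k + 1) * n = a.length + k * n by rw [ha]; ring, flatten_cons,
        drop_length_add_append, drop_succ_cons]
      exact ih (fun l hl => h l (mem_cons_of_mem a hl)) k

theorem take_drop_flatten_of_forall_length_eq (h : ∀ l ∈ L, l.length = n) {k : ℕ}
    (hk : k < L.length) : (L.flatten.drop (k * n)).take n = L[k] := by
  rw [drop_flatten_of_forall_length_eq h, drop_eq_getElem_cons hk, flatten_cons,
    take_left' (h _ (getElem_mem hk))]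

end List

theorem subwordN_flatten {Γ : Type*} {n : ℕ} (hn : 0 < n) {L : List (List Γ)}
    (h : ∀ l ∈ L, l.length = n) : subwordN n L.flatten = {u | u ∈ L} := by
  ext u
  simp only [subwordN, Set.mem_ofPred_eq, List.length_flatten_of_forall_length_eq h,
    Nat.mul_le_mul_right_iff hn, Nat.succ_le_iff, List.mem_iff_getElem]
  constructor <;> rintro ⟨k, hk, rfl⟩ <;>
    exact ⟨k, hk, (List.take_drop_flatten_of_forall_length_eq h hk).symm⟩

section LnLang

variable {n : ℕ}

def blocksWord (L : List (List.Vector Bool n)) : List (Option Bool) :=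
  (L.map fun v => v.toList.map some).flatten

theorem blocksWord_append (L₁ L₂ : List (List.Vector Bool n)) :
    blocksWord (L₁ ++ L₂) = blocksWord L₁ ++ blocksWord L₂ := by
  simp [blocksWord]

theorem blocksWord_mem_LnLang_iff (hn : 0 < n) (L : List (List.Vector Bool n)) :
    blocksWord L ∈ LnLang n ↔ ∀ v, v ∈ L := by
  have h_len : ∀ l ∈ L.map fun v => v.toList.map some, l.length = n := by simp
  simp only [LnLang, blocksWord, subwordN_flatten hn h_len, Set.mem_ofPred_eq, List.mem_map,
    List.map_inj_right (Option.some_injective Bool)]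
  refine ⟨fun h v => ?_, fun h v hv => ⟨⟨v, hv⟩, h _, rfl⟩⟩
  obtain ⟨u, hu, hu_eq⟩ := h v.toList v.toList_length
  rwa [← List.Vector.toList_injective hu_eq]

theorem blocksWord_append_compl_mem_LnLang_iff (hn : 0 < n) (S T : Finset (List.Vector Bool n)) :
    blocksWord S.toList ++ blocksWord Tᶜ.toList ∈ LnLang n ↔ T ⊆ S := by
  simp only [← blocksWord_append, blocksWord_mem_LnLang_iff hn, List.mem_append,
    Finset.mem_toList, Finset.mem_compl, or_iff_not_imp_right, not_not, Finset.subset_iff]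

end LnLang

/-- Every NFA recognizing `L_n` has at least `C(2^n, 2^(n-1))` states. -/
theorem nfa_for_Ln_lower_bound (n : ℕ) (hn : 0 < n) {Q : Type*} [Fintype Q]
    (M : NFA (Option Bool) Q) (hM : M.accepts = LnLang n) :
    Nat.choose (2 ^ n) (2 ^ (n - 1)) ≤ Fintype.card Q := by
  let ι := {S : Finset (List.Vector Bool n) // S.card = 2 ^ (n - 1)}
  have h_accepts (S T : ι) :
      blocksWord S.1.toList ++ blocksWord T.1ᶜ.toList ∈ M.accepts ↔ T.1 ⊆ S.1 :=
    hM ▸ blocksWord_append_compl_mem_LnLang_iff hn S.1 T.1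
  calc Nat.choose (2 ^ n) (2 ^ (n - 1)) = Fintype.card ι := by
        rw [Fintype.card_finset_len, card_vector, Fintype.card_bool]
    _ ≤ Fintype.card Q :=
      M.card_le_card_of_fooling _ _ (fun S => (h_accepts S S).2 subset_rfl) fun S T h_ST _ =>
        (Subtype.ext (Finset.eq_of_subset_of_card_le ((h_accepts S T).1 h_ST)
          (by rw [S.2, T.2]))).symm
end
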